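/- Let (Ω, ℱ, P) be a probability space where Ω is a standard Borel space and ℱ its Borel σ-algebra. Let 𝒢₁, 𝒢₂, 𝒢₃ be sub-σ-algebras of ℱ that are mutually independent (as a triple), and let ℋ₁ ⊆ 𝒢₁ and ℋ₂ ⊆ 𝒢₂ be sub-σ-algebras. Then 𝒢₁ and 𝒢₂ are conditionally independent given the σ-algebra ℋ₁ ⊔ ℋ₂ ⊔ 𝒢₃ generated by ℋ₁, ℋ₂ and 𝒢₃. -/

import Mathlib

/-!
Since `𝒢₂` is independent of `𝒢₁ ⊔ 𝒢₃`, for `B ∈ 𝒢₂` and any `𝒦 ≤ 𝒢₁ ⊔ 𝒢₃` one has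
`P[1_B | ℋ₂ ⊔ 𝒦] = P[1_B | ℋ₂]` (compare set integrals on the π-system of sets `s ∩ t`,
`s ∈ ℋ₂`, `t ∈ 𝒦`). With `𝒦 = ℋ₁ ⊔ 𝒢₃` and `𝒦 = 𝒢₁ ⊔ 𝒢₃` this gives
`P[1_B | 𝒢₁ ⊔ 𝓜] = P[1_B | 𝓜]` for `𝓜 = ℋ₁ ⊔ ℋ₂ ⊔ 𝒢₃`, and this Markov property yields
`P[1_{A ∩ B} | 𝓜] = P[1_A | 𝓜] P[1_B | 𝓜]` by the tower property and pulling out `1_A`.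
-/

open MeasureTheory ProbabilityTheory MeasurableSpace Set

namespace MeasureTheory

variable {Ω : Type*}

lemma isPiSystem_image2_inter (m₁ m₂ : MeasurableSpace Ω) :
    IsPiSystem (image2 (· ∩ ·) {s | MeasurableSet[m₁] s} {t | MeasurableSet[m₂] t}) := by
  rintro _ ⟨s₁, hs₁, t₁, ht₁, rfl⟩ _ ⟨s₂, hs₂, t₂, ht₂, rfl⟩ -
  exact ⟨s₁ ∩ s₂, hs₁.inter hs₂, t₁ ∩ t₂, ht₁.inter ht₂, inter_inter_inter_comm s₁ s₂ t₁ t₂⟩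

lemma generateFrom_image2_inter (m₁ m₂ : MeasurableSpace Ω) :
    generateFrom (image2 (· ∩ ·) {s | MeasurableSet[m₁] s} {t | MeasurableSet[m₂] t}) =
      m₁ ⊔ m₂ := by
  refine le_antisymm (generateFrom_le ?_) (sup_le (fun s hs => ?_) (fun t ht => ?_))
  · rintro _ ⟨s, hs, t, ht, rfl⟩
    exact (le_sup_left (b := m₂) s hs).inter (le_sup_right (a := m₁) t ht)
  · exact measurableSet_generateFrom ⟨s, hs, univ, .univ, inter_univ s⟩
  · exact measurableSet_generateFrom ⟨univ, .univ, t, ht, univ_inter t⟩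

variable {E : Type*} [NormedAddCommGroup E] [NormedSpace ℝ E]

lemma setIntegral_eq_of_isPiSystem {m m₀ : MeasurableSpace Ω} {μ : Measure[m₀] Ω} (hm : m ≤ m₀)
    {p : Set (Set Ω)} (hgen : m = generateFrom p) (hp : IsPiSystem p) {f g : Ω → E}
    (hf : Integrable f μ) (hg : Integrable g μ) (huniv : ∫ x, f x ∂μ = ∫ x, g x ∂μ)
    (heq : ∀ s ∈ p, ∫ x in s, f x ∂μ = ∫ x in s, g x ∂μ) {s : Set Ω}
    (hs : MeasurableSet[m] s) : ∫ x in s, f x ∂μ = ∫ x in s, g x ∂μ := by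
  induction s, hs using induction_on_inter hgen hp with
  | empty => simp
  | basic t ht => exact heq t ht
  | compl t ht iht =>
    rw [setIntegral_compl (hm t ht) hf, setIntegral_compl (hm t ht) hg, huniv, iht]
  | iUnion t hdisj ht iht =>
    rw [integral_iUnion (fun i => hm _ (ht i)) hdisj hf.integrableOn,
      integral_iUnion (fun i => hm _ (ht i)) hdisj hg.integrableOn]
    exact tsum_congr iht

variable [CompleteSpace E]

lemma setIntegral_eq_measureReal_smul_integral_of_indep {m₁ m₂ m₀ : MeasurableSpace Ω}
    {μ : Measure[m₀] Ω} [IsFiniteMeasure μ] (h₁ : m₁ ≤ m₀) (h₂ : m₂ ≤ m₀) (hind : Indep m₁ m₂ μ)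
    {f : Ω → E} (hf : StronglyMeasurable[m₁] f) (hfi : Integrable f μ) {t : Set Ω}
    (ht : MeasurableSet[m₂] t) : ∫ x in t, f x ∂μ = μ.real t • ∫ x, f x ∂μ := by
  rw [← setIntegral_condExp h₂ hfi ht, setIntegral_congr_ae (h₂ t ht)
    ((condExp_indep_eq h₁ h₂ hf hind).mono fun _ hx _ => hx), setIntegral_const]

theorem condExp_sup_eq_condExp_of_indep {H G K m₀ : MeasurableSpace Ω} {μ : Measure[m₀] Ω}
    [IsFiniteMeasure μ] (hHG : H ≤ G) (hG : G ≤ m₀) (hK : K ≤ m₀) (hind : Indep G K μ)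
    {f : Ω → E} (hf : StronglyMeasurable[G] f) : μ[f | H ⊔ K] =ᵐ[μ] μ[f | H] := by
  by_cases hfi : Integrable f μ
  swap; · simp_rw [condExp_of_not_integrable hfi]; rfl
  have hH : H ≤ m₀ := hHG.trans hG
  have hHK : H ⊔ K ≤ m₀ := sup_le hH hK
  have h_inter : ∀ g : Ω → E, StronglyMeasurable[G] g → Integrable g μ →
      ∀ s t, MeasurableSet[H] s → MeasurableSet[K] t →
      ∫ x in s ∩ t, g x ∂μ = μ.real t • ∫ x in s, g x ∂μ := by
    intro g hg hgi s t hs ht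
    rw [inter_comm, ← setIntegral_indicator (hH s hs),
      setIntegral_eq_measureReal_smul_integral_of_indep hG hK hind (hg.indicator (hHG s hs))
        (hgi.indicator (hH s hs)) ht, integral_indicator (hH s hs)]
  have h_pi : ∀ u ∈ image2 (· ∩ ·) {s | MeasurableSet[H] s} {t | MeasurableSet[K] t},
      ∫ x in u, (μ[f | H]) x ∂μ = ∫ x in u, f x ∂μ := by
    rintro _ ⟨s, hs, t, ht, rfl⟩
    rw [h_inter _ (stronglyMeasurable_condExp.mono hHG) integrable_condExp s t hs ht,
      h_inter f hf hfi s t hs ht, setIntegral_condExp hH hfi hs]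
  refine (ae_eq_condExp_of_forall_setIntegral_eq hHK hfi
    (fun _ _ _ => integrable_condExp.integrableOn) (fun s hs _ => ?_)
    (stronglyMeasurable_condExp.mono (le_sup_left : H ≤ H ⊔ K)).aestronglyMeasurable).symm
  exact setIntegral_eq_of_isPiSystem hHK (generateFrom_image2_inter H K).symm
    (isPiSystem_image2_inter H K) integrable_condExp hfi (integral_condExp hH) h_pi hs

end MeasureTheory

namespace ProbabilityTheory

variable {Ω : Type*}

lemma iIndep.indep_sup {ι : Type*} {m : ι → MeasurableSpace Ω} {mΩ : MeasurableSpace Ω}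
    {μ : Measure[mΩ] Ω} (h : iIndep m μ) (h_le : ∀ i, m i ≤ mΩ) {i j k : ι} (hij : i ≠ j)
    (hik : i ≠ k) : Indep (m i) (m j ⊔ m k) μ := by
  simpa [iSup_or, iSup_sup_eq, iSup_iSup_eq_left] using
    indep_iSup_of_disjoint h_le h (S := {i}) (T := {j, k}) (by simp [hij, hik])

theorem condIndep_of_condExp_sup_eq {m' m₁ m₂ : MeasurableSpace Ω} {mΩ : MeasurableSpace Ω}
    [StandardBorelSpace Ω] {μ : Measure Ω} [IsFiniteMeasure μ] (hm' : m' ≤ mΩ) (hm₁ : m₁ ≤ mΩ)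
    (hm₂ : m₂ ≤ mΩ) (h : ∀ t, MeasurableSet[m₂] t → μ⟦t | m₁ ⊔ m'⟧ =ᵐ[μ] μ⟦t | m'⟧) :
    CondIndep m' m₁ m₂ hm' μ := by
  rw [condIndep_iff m' m₁ m₂ hm' hm₁ hm₂]
  intro t₁ t₂ ht₁ ht₂
  set χ₁ : Ω → ℝ := t₁.indicator fun _ => 1
  set χ₂ : Ω → ℝ := t₂.indicator fun _ => 1
  have hχ₁ : Integrable χ₁ μ := (integrable_const 1).indicator (hm₁ t₁ ht₁)
  have hχ₂ : Integrable χ₂ μ := (integrable_const 1).indicator (hm₂ t₂ ht₂)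
  have hχ₁_le : ∀ᵐ x ∂μ, ‖χ₁ x‖ ≤ 1 :=
    .of_forall fun x => (norm_indicator_le_norm_self _ x).trans norm_one.le
  have hsup : m₁ ⊔ m' ≤ mΩ := sup_le hm₁ hm'
  calc μ⟦t₁ ∩ t₂ | m'⟧ = μ[χ₁ * χ₂ | m'] := congrArg (μ[· | m']) inter_indicator_one
    _ =ᵐ[μ] μ[μ[χ₁ * χ₂ | m₁ ⊔ m'] | m'] := (condExp_condExp_of_le le_sup_right hsup).symm
    _ =ᵐ[μ] μ[χ₁ * μ⟦t₂ | m₁ ⊔ m'⟧ | m'] := condExp_congr_ae <|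
      condExp_stronglyMeasurable_mul_of_bound hsup
        (stronglyMeasurable_const.indicator (le_sup_left (b := m') t₁ ht₁)) hχ₂ 1 hχ₁_le
    _ =ᵐ[μ] μ[χ₁ * μ⟦t₂ | m'⟧ | m'] :=
      condExp_congr_ae <| Filter.EventuallyEq.rfl.mul (h t₂ ht₂)
    _ =ᵐ[μ] μ⟦t₁ | m'⟧ * μ⟦t₂ | m'⟧ := condExp_mul_of_stronglyMeasurable_right
      stronglyMeasurable_condExp (integrable_condExp.bdd_mul
        (hχ₁.aestronglyMeasurable) hχ₁_le) hχ₁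

end ProbabilityTheory

/-- If `𝒢₁, 𝒢₂, 𝒢₃` are mutually independent sub-σ-algebras and `ℋ₁ ⊆ 𝒢₁`, `ℋ₂ ⊆ 𝒢₂`,
then `𝒢₁` and `𝒢₂` are conditionally independent given `ℋ₁ ⊔ ℋ₂ ⊔ 𝒢₃`. -/
theorem condIndep_of_iIndep_triple_of_le
    {Ω : Type*} {mΩ : MeasurableSpace Ω} [StandardBorelSpace Ω]
    (P : Measure Ω) [IsProbabilityMeasure P]
    (G₁ G₂ G₃ H₁ H₂ : MeasurableSpace Ω)
    (hG₁ : G₁ ≤ mΩ) (hG₂ : G₂ ≤ mΩ) (hG₃ : G₃ ≤ mΩ)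
    (hH₁ : H₁ ≤ G₁) (hH₂ : H₂ ≤ G₂)
    (hindep : iIndep (fun i : Fin 3 => ![G₁, G₂, G₃] i) P) :
    CondIndep (H₁ ⊔ H₂ ⊔ G₃) G₁ G₂
      (sup_le (sup_le (hH₁.trans hG₁) (hH₂.trans hG₂)) hG₃) P := by
  have h₂_indep : Indep G₂ (G₁ ⊔ G₃) P :=
    hindep.indep_sup (i := 1) (j := 0) (k := 2) (fun i => by fin_cases i <;> assumption)
      (by decide) (by decide)
  refine condIndep_of_condExp_sup_eq _ hG₁ hG₂ fun B hB => ?_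
  have hχ : StronglyMeasurable[G₂] (B.indicator fun _ => (1 : ℝ)) :=
    stronglyMeasurable_const.indicator hB
  calc P⟦B | G₁ ⊔ (H₁ ⊔ H₂ ⊔ G₃)⟧ = P⟦B | H₂ ⊔ (G₁ ⊔ G₃)⟧ := by
        rw [← sup_assoc, ← sup_assoc, sup_eq_left.2 hH₁]; ac_rfl
    _ =ᵐ[P] P⟦B | H₂⟧ := condExp_sup_eq_condExp_of_indep hH₂ hG₂ (sup_le hG₁ hG₃) h₂_indep hχ
    _ =ᵐ[P] P⟦B | H₂ ⊔ (H₁ ⊔ G₃)⟧ :=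
      (condExp_sup_eq_condExp_of_indep hH₂ hG₂ (sup_le (hH₁.trans hG₁) hG₃)
        (indep_of_indep_of_le_right h₂_indep (sup_le_sup_right hH₁ G₃)) hχ).symm
    _ = P⟦B | H₁ ⊔ H₂ ⊔ G₃⟧ := by rw [← sup_assoc, sup_comm H₂]
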